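/- arXiv:2508.17140 — 3 statements merged into one kernel-verified Lean document; each statement's English description precedes it below -/
import Mathlib

section
/- Let n ≥ 1 and let ψ ∈ ℂⁿ be a unit vector (∑ᵢ |ψᵢ|² = 1), and let ρ = ψψᴴ be the associated rank-one projection (ρᵢⱼ = ψᵢ · conj(ψⱼ)). Then the robustness of imaginarity of ρ equals √(1 − |∑ᵢ ψᵢ²|²), i.e. (1/2)‖ρ − ρᵀ‖₁ = √(1 − |∑ᵢ ψᵢ²|²). (Here ∑ᵢ ψᵢ² = ⟨ψ*, ψ⟩ is the inner product of the entrywise complex conjugate of ψ with ψ.) -/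
open Matrix Kronecker
open scoped ComplexOrder

/-- Trace norm of a square complex matrix: `Tr[sqrt(Aᴴ A)]`. -/
noncomputable def traceNorm {n : Type*} [Fintype n] [DecidableEq n]
    (A : Matrix n n ℂ) : ℝ :=
  (((Matrix.posSemidef_conjTranspose_mul_self A).1.eigenvectorUnitary : Matrix n n ℂ) *
    diagonal (((↑) : ℝ → ℂ) ∘ (√·) ∘ (Matrix.posSemidef_conjTranspose_mul_self A).1.eigenvalues) *
    (star (Matrix.posSemidef_conjTranspose_mul_self A).1.eigenvectorUnitary : Matrix n n ℂ)).trace.re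

/-- Robustness of imaginarity: `(1/2) ‖ρ - ρᵀ‖₁`. -/
noncomputable def roi {n : Type*} [Fintype n] [DecidableEq n]
    (ρ : Matrix n n ℂ) : ℝ :=
  (1 / 2) * traceNorm (ρ - ρ.transpose)

/-! For unit vectors `u`, `v` put `P = uuᴴ`, `Q = vvᴴ`, `z = ⟨u, v⟩` and `L = 1 - |z|²`.
Since `PQP = |z|² P` and `QPQ = |z|² Q`, the Hermitian matrix `A = P - Q` satisfies `A³ = L A`,
so `(A²)² = L A²` and `√(AᴴA) = √(A²) = A² / √L`. With `tr A² = 2L` this gives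
`‖A‖₁ = 2L / √L = 2√L`. For `ρ = ψψᴴ` the transpose is `ρᵀ = ψ̄ψ̄ᴴ`, and `⟨ψ, ψ̄⟩` is the
conjugate of `∑ ψᵢ²`. -/

section TraceNorm

variable {m : Type*} [Fintype m] [DecidableEq m]

open scoped MatrixOrder

theorem traceNorm_eq_re_trace_sqrt (A : Matrix m m ℂ) :
    traceNorm A = (CFC.sqrt (Aᴴ * A)).trace.re := by
  have hA := Matrix.posSemidef_conjTranspose_mul_self A
  rw [CFC.sqrt_eq_cfc, cfc_nnreal_eq_real _ _ hA.nonneg, hA.1.cfc_eq, traceNorm]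
  simp only [IsHermitian.cfc, Unitary.conjStarAlgAut_apply]
  congr 5
  funext i
  simp [max_eq_left (hA.eigenvalues_nonneg i)]

theorem traceNorm_eq_of_mul_self_eq {A S : Matrix m m ℂ} (hS : S.PosSemidef)
    (h : S * S = Aᴴ * A) : traceNorm A = S.trace.re := by
  rw [traceNorm_eq_re_trace_sqrt, CFC.sqrt_unique h hS.nonneg]

theorem traceNorm_eq_of_mul_mul_self_eq_smul {A : Matrix m m ℂ} (hA : A.IsHermitian) {L : ℝ}
    (hL : 0 ≤ L) (h : A * A * A = (L : ℂ) • A) :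
    traceNorm A = (A * A).trace.re / √L := by
  -- at `L = 0` the right-hand side is `0` through division by zero, and indeed `A = 0`
  have hsq : (A * A) * (A * A) = (L : ℂ) • (A * A) := by
    rw [← mul_assoc, h, smul_mul_assoc]
  rcases hL.eq_or_lt with rfl | hL
  · have hAA : A * A = 0 := by
      rw [← conjTranspose_mul_self_eq_zero, conjTranspose_mul, hA.eq, hsq]
      simp
    rw [traceNorm_eq_of_mul_self_eq PosSemidef.zero (by rw [hA.eq, hAA, mul_zero])]
    simp
  · have hc : (0 : ℂ) ≤ ((√L)⁻¹ : ℝ) := by exact_mod_cast (inv_pos.2 (Real.sqrt_pos.2 hL)).le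
    have hS : ((((√L)⁻¹ : ℝ) : ℂ) • (A * A)).PosSemidef := by
      refine PosSemidef.smul ?_ hc
      simpa [hA.eq] using posSemidef_conjTranspose_mul_self A
    rw [traceNorm_eq_of_mul_self_eq hS]
    · rw [trace_smul, smul_eq_mul, Complex.re_ofReal_mul, div_eq_inv_mul]
    · rw [smul_mul_smul_comm, hsq, smul_smul, hA.eq, ← Complex.ofReal_mul, ← Complex.ofReal_mul,
        ← mul_inv, Real.mul_self_sqrt hL.le, inv_mul_cancel₀ hL.ne', Complex.ofReal_one, one_smul]

end TraceNorm

theorem sub_mul_sub_mul_sub_eq_smul {K R : Type*} [CommRing K] [Ring R] [Algebra K R] {p q : R}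
    (hp : IsIdempotentElem p) (hq : IsIdempotentElem q) {c : K}
    (hpqp : p * q * p = c • p) (hqpq : q * p * q = c • q) :
    (p - q) * (p - q) * (p - q) = (1 - c) • (p - q) := by
  calc (p - q) * (p - q) * (p - q)
      = p * p * p - p * p * q - p * q * p + p * (q * q) - q * (p * p) + q * p * q
          + q * q * p - q * q * q := by noncomm_ring
    _ = (1 - c) • (p - q) := by
      rw [hp.eq, hp.eq, hq.eq, hq.eq, hpqp, hqpq]
      module

theorem trace_sub_mul_sub_of_isIdempotentElem {m α : Type*} [Fintype m] [CommRing α]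
    {P Q : Matrix m m α} (hP : IsIdempotentElem P) (hQ : IsIdempotentElem Q) {c : α}
    (hPQP : P * Q * P = c • P) :
    ((P - Q) * (P - Q)).trace = P.trace + Q.trace - 2 * c * P.trace := by
  have hPQ : (P * Q).trace = c * P.trace := by
    rw [← hP.eq, ← trace_mul_cycle, hP.eq, hPQP, trace_smul, smul_eq_mul]
  rw [sub_mul, mul_sub, mul_sub, hP.eq, hQ.eq, trace_sub, trace_sub, trace_sub, trace_mul_comm Q,
    hPQ]
  ring

section RankOne

variable {m : Type*} (u v : m → ℂ)

theorem isHermitian_vecMulVec_star : (vecMulVec u (star u)).IsHermitian := by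
  rw [IsHermitian, conjTranspose_vecMulVec, star_star]

variable [Fintype m]

variable {u} in
theorem isIdempotentElem_vecMulVec_star (hu : star u ⬝ᵥ u = 1) :
    IsIdempotentElem (vecMulVec u (star u)) := by
  rw [IsIdempotentElem, vecMulVec_mul_vecMulVec, hu, one_smul]

theorem vecMulVec_star_mul_mul_self :
    vecMulVec u (star u) * vecMulVec v (star v) * vecMulVec u (star u) =
      ((‖star u ⬝ᵥ v‖ ^ 2 : ℝ) : ℂ) • vecMulVec u (star u) := by
  rw [vecMulVec_mul_vecMulVec, vecMulVec_mul_vecMulVec, smul_dotProduct, vecMulVec_smul,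
    smul_eq_mul, star_dotProduct v u, Complex.star_def, Complex.mul_conj', Complex.ofReal_pow]

end RankOne

theorem traceNorm_vecMulVec_star_sub_vecMulVec_star {m : Type*} [Fintype m] [DecidableEq m]
    {u v : m → ℂ} (hu : star u ⬝ᵥ u = 1) (hv : star v ⬝ᵥ v = 1) :
    traceNorm (vecMulVec u (star u) - vecMulVec v (star v)) =
      2 * √(1 - ‖star u ⬝ᵥ v‖ ^ 2) := by
  set P := vecMulVec u (star u)
  set Q := vecMulVec v (star v)
  set L := 1 - ‖star u ⬝ᵥ v‖ ^ 2
  have hP := isIdempotentElem_vecMulVec_star hu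
  have hQ := isIdempotentElem_vecMulVec_star hv
  have hA : (P - Q).IsHermitian :=
    (isHermitian_vecMulVec_star u).sub (isHermitian_vecMulVec_star v)
  have hQPQ : Q * P * Q = ((‖star u ⬝ᵥ v‖ ^ 2 : ℝ) : ℂ) • Q := by
    rw [vecMulVec_star_mul_mul_self, star_dotProduct, norm_star]
  have hcube : (P - Q) * (P - Q) * (P - Q) = (L : ℂ) • (P - Q) := by
    rw [sub_mul_sub_mul_sub_eq_smul hP hQ (vecMulVec_star_mul_mul_self u v) hQPQ,
      Complex.ofReal_sub, Complex.ofReal_one]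
  have htrace : ((P - Q) * (P - Q)).trace = ((2 * L : ℝ) : ℂ) := by
    rw [trace_sub_mul_sub_of_isIdempotentElem hP hQ (vecMulVec_star_mul_mul_self u v),
      trace_vecMulVec, trace_vecMulVec, dotProduct_comm, hu, dotProduct_comm, hv]
    push_cast [L]
    ring
  -- no Cauchy–Schwarz needed: `L` is half the trace of the positive semidefinite `A²`
  have hL : 0 ≤ L := by
    have := (hA.eq ▸ posSemidef_conjTranspose_mul_self (P - Q)).trace_nonneg
    rw [htrace, Complex.zero_le_real] at this
    linarith
  rw [traceNorm_eq_of_mul_mul_self_eq_smul hA hL hcube, htrace, Complex.ofReal_re, mul_div_assoc,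
    Real.div_sqrt]

theorem stmt0_general (n : ℕ) (ψ : Fin n → ℂ)
    (hψ : ∑ i, ‖ψ i‖ ^ 2 = 1) :
    roi (Matrix.vecMulVec ψ (star ψ)) =
      Real.sqrt (1 - ‖∑ i, ψ i ^ 2‖ ^ 2) := by
  have hunit : star ψ ⬝ᵥ ψ = 1 := by
    simp only [dotProduct, Pi.star_apply, Complex.star_def, Complex.conj_mul']
    exact_mod_cast hψ
  have hunit' : star (star ψ) ⬝ᵥ star ψ = 1 := by
    rw [star_star, dotProduct_comm, hunit]
  have hpairing : star ψ ⬝ᵥ star ψ = star (∑ i, ψ i ^ 2) := by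
    simp [dotProduct, sq]
  have htranspose : (vecMulVec ψ (star ψ))ᵀ = vecMulVec (star ψ) (star (star ψ)) := by
    rw [transpose_vecMulVec, star_star]
  rw [roi, htranspose, traceNorm_vecMulVec_star_sub_vecMulVec_star hunit hunit', hpairing,
    norm_star]
  ring

/-- For a unit vector `ψ ∈ ℂⁿ`, the robustness of imaginarity of the
rank-one projection `ρ = ψψᴴ` equals `√(1 − |∑ᵢ ψᵢ²|²)`. -/
theorem stmt0 (n : ℕ) (hn : 1 ≤ n) (ψ : Fin n → ℂ)
    (hψ : ∑ i, ‖ψ i‖ ^ 2 = 1) :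
    roi (Matrix.vecMulVec ψ (star ψ)) =
      Real.sqrt (1 - ‖∑ i, ψ i ^ 2‖ ^ 2) :=
  stmt0_general n ψ hψ
end

section
/- Let n_x, n_y, n_z ∈ ℝ satisfy n_x² + n_y² + n_z² ≤ 1, and let θ, φ ∈ ℝ. Then the two-basis imaginarity complementarity relation holds: |n_y·cos φ − n_x·sin φ| + |n_x·cos θ·cos φ + n_y·cos θ·sin φ − n_z·sin θ| ≤ √2. -/
/-- the two-basis imaginarity complementarity relation for a Bloch
vector `(n_x, n_y, n_z)` with `n_x² + n_y² + n_z² ≤ 1`. -/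
theorem stmt5 (nx ny nz : ℝ) (h : nx ^ 2 + ny ^ 2 + nz ^ 2 ≤ 1) (θ φ : ℝ) :
    |ny * Real.cos φ - nx * Real.sin φ|
      + |nx * Real.cos θ * Real.cos φ + ny * Real.cos θ * Real.sin φ
          - nz * Real.sin θ| ≤ Real.sqrt 2 := by
  set a := ny * Real.cos φ - nx * Real.sin φ with ha
  set b := nx * Real.cos θ * Real.cos φ + ny * Real.cos θ * Real.sin φ - nz * Real.sin θ with hb
  set c := nx * Real.sin θ * Real.cos φ + ny * Real.sin θ * Real.sin φ + nz * Real.cos θ with hcd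
  have key : a ^ 2 + b ^ 2 + c ^ 2 = nx ^ 2 + ny ^ 2 + nz ^ 2 := by
    have h1 := Real.sin_sq_add_cos_sq θ
    have h2 := Real.sin_sq_add_cos_sq φ
    simp only [ha, hb, hcd]
    linear_combination ((nx * Real.cos φ + ny * Real.sin φ) ^ 2 + nz ^ 2) * h1
      + (nx ^ 2 + ny ^ 2) * h2
  have hc : a ^ 2 + b ^ 2 ≤ 1 := by nlinarith [sq_nonneg c]
  have h2 : (|a| + |b|) ^ 2 ≤ 2 := by
    have := abs_abs_sub_abs_le_abs_sub a b
    nlinarith [sq_nonneg (|a| - |b|), sq_abs a, sq_abs b]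
  have hnn : (0:ℝ) ≤ |a| + |b| := by positivity
  nlinarith [Real.sq_sqrt (by norm_num : (0:ℝ) ≤ 2), Real.sqrt_nonneg 2]
end

section
/- Let C ∈ [0,1] and let h(C) = 1/3 if C < 2/3 and h(C) = C/2 if C ≥ 2/3. Let ρ_MEMS be the maximally entangled mixed state: the 4×4 matrix (indexed by {0,1,2,3}, identifying (i,j) ∈ Fin 2 × Fin 2 with 2i+j) with diagonal (h(C), 1−2h(C), 0, h(C)), with ρ₀₃ = ρ₃₀ = C/2, and all other entries zero. Then I₂(ρ_MEMS) = 2C; consequently ρ_MEMS violates the imaginarity steering inequality, I₂(ρ_MEMS) > √2, if and only if C > 1/√2. -/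
open Matrix Kronecker
open scoped ComplexOrder

def σx : Matrix (Fin 2) (Fin 2) ℂ := !![0, 1; 1, 0]
def σy : Matrix (Fin 2) (Fin 2) ℂ := !![0, -Complex.I; Complex.I, 0]
def σz : Matrix (Fin 2) (Fin 2) ℂ := !![1, 0; 0, -1]
/-- Hadamard matrix (x-basis change). -/
noncomputable def Hm : Matrix (Fin 2) (Fin 2) ℂ :=
  (Real.sqrt 2 : ℂ)⁻¹ • !![1, 1; 1, -1]
/-- Eigenvector matrix of σy (y-basis change). -/
noncomputable def Vm : Matrix (Fin 2) (Fin 2) ℂ :=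
  (Real.sqrt 2 : ℂ)⁻¹ • !![1, 1; Complex.I, -Complex.I]

/-- Robustness of imaginarity in the x-basis. -/
noncomputable def roiX (σ : Matrix (Fin 2) (Fin 2) ℂ) : ℝ := roi (Hm * σ * Hm)
/-- Robustness of imaginarity in the y-basis. -/
noncomputable def roiY (σ : Matrix (Fin 2) (Fin 2) ℂ) : ℝ := roi (Vmᴴ * σ * Vm)
noncomputable def n1 (ρ : Matrix (Fin 2 × Fin 2) (Fin 2 × Fin 2) ℂ) : ℝ :=
  ((((1 : Matrix (Fin 2) (Fin 2) ℂ) ⊗ₖ σx) * ρ).trace).re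
noncomputable def n2 (ρ : Matrix (Fin 2 × Fin 2) (Fin 2 × Fin 2) ℂ) : ℝ :=
  ((((1 : Matrix (Fin 2) (Fin 2) ℂ) ⊗ₖ σy) * ρ).trace).re
noncomputable def t11 (ρ : Matrix (Fin 2 × Fin 2) (Fin 2 × Fin 2) ℂ) : ℝ :=
  (((σx ⊗ₖ σx) * ρ).trace).re
noncomputable def t22 (ρ : Matrix (Fin 2 × Fin 2) (Fin 2 × Fin 2) ℂ) : ℝ :=
  (((σy ⊗ₖ σy) * ρ).trace).re

/-- The imaginarity steering functional. -/
noncomputable def I2 (ρ : Matrix (Fin 2 × Fin 2) (Fin 2 × Fin 2) ℂ) : ℝ :=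
  (1 / 2) * (|n1 ρ - t11 ρ| + |n1 ρ + t11 ρ| + |n2 ρ - t22 ρ| + |n2 ρ + t22 ρ|)

/-- The function `h(C)` of the MEMS family. -/
noncomputable def hMEMS (C : ℝ) : ℝ := if C < 2 / 3 then 1 / 3 else C / 2

/-- The maximally entangled mixed state with concurrence parameter `C`:
diagonal `(h(C), 1−2h(C), 0, h(C))` and anti-diagonal corners `C/2`. -/
noncomputable def memsState (C : ℝ) : Matrix (Fin 2 × Fin 2) (Fin 2 × Fin 2) ℂ :=
  Matrix.of fun p q =>
    if p = ((0 : Fin 2), (0 : Fin 2)) ∧ q = ((0 : Fin 2), (0 : Fin 2)) then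
      (hMEMS C : ℂ)
    else if p = ((0 : Fin 2), (1 : Fin 2)) ∧ q = ((0 : Fin 2), (1 : Fin 2)) then
      ((1 - 2 * hMEMS C : ℝ) : ℂ)
    else if p = ((1 : Fin 2), (1 : Fin 2)) ∧ q = ((1 : Fin 2), (1 : Fin 2)) then
      (hMEMS C : ℂ)
    else if p = ((0 : Fin 2), (0 : Fin 2)) ∧ q = ((1 : Fin 2), (1 : Fin 2)) then
      ((C / 2 : ℝ) : ℂ)
    else if p = ((1 : Fin 2), (1 : Fin 2)) ∧ q = ((0 : Fin 2), (0 : Fin 2)) then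
      ((C / 2 : ℝ) : ℂ)
    else 0

lemma I2_eq_of_n1_eq_zero_of_n2_eq_zero {ρ : Matrix (Fin 2 × Fin 2) (Fin 2 × Fin 2) ℂ}
    (h1 : n1 ρ = 0) (h2 : n2 ρ = 0) : I2 ρ = |t11 ρ| + |t22 ρ| := by
  rw [I2, h1, h2]
  simp only [zero_sub, zero_add, abs_neg]
  ring

section memsState

variable (C : ℝ)

-- `1 ⊗ σx` and `1 ⊗ σy` only read the coherences `ρ (i,0) (i,1)`, all zero in the MEMS;
-- `σx ⊗ σx` and `σy ⊗ σy` read the corners `ρ (0,0) (1,1)`, with signs `+` and `-`.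
lemma n1_memsState : n1 (memsState C) = 0 := by
  simp [n1, memsState, trace, mul_apply, Fintype.sum_prod_type, Fin.sum_univ_succ, σx,
    one_apply, Prod.ext_iff]

lemma n2_memsState : n2 (memsState C) = 0 := by
  simp [n2, memsState, trace, mul_apply, Fintype.sum_prod_type, Fin.sum_univ_succ, σy,
    one_apply, Prod.ext_iff]

lemma t11_memsState : t11 (memsState C) = C := by
  simp [t11, memsState, trace, mul_apply, Fintype.sum_prod_type, Fin.sum_univ_succ, σx,
    Prod.ext_iff]

lemma t22_memsState : t22 (memsState C) = -C := by
  simp [t22, memsState, trace, mul_apply, Fintype.sum_prod_type, Fin.sum_univ_succ, σy,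
    Prod.ext_iff, ← neg_add, add_halves]

end memsState

lemma I2_memsState {C : ℝ} (hC : 0 ≤ C) : I2 (memsState C) = 2 * C := by
  rw [I2_eq_of_n1_eq_zero_of_n2_eq_zero (n1_memsState C) (n2_memsState C), t11_memsState,
    t22_memsState, abs_neg, abs_of_nonneg hC, two_mul]

lemma sqrt_two_lt_two_mul_iff (C : ℝ) : √2 < 2 * C ↔ 1 / √2 < C := by
  rw [← Real.sqrt_div_self', div_lt_iff₀' two_pos]

theorem stmt18_general (C : ℝ) (hC0 : 0 ≤ C) :
    I2 (memsState C) = 2 * C ∧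
      (Real.sqrt 2 < I2 (memsState C) ↔ 1 / Real.sqrt 2 < C) := by
  rw [I2_memsState hC0]
  exact ⟨rfl, sqrt_two_lt_two_mul_iff C⟩

/-- the MEMS satisfies `I₂(ρ_MEMS) = 2C`, so it violates the
imaginarity steering inequality iff `C > 1/√2`. -/
theorem stmt18 (C : ℝ) (hC0 : 0 ≤ C) (hC1 : C ≤ 1) :
    I2 (memsState C) = 2 * C ∧
      (Real.sqrt 2 < I2 (memsState C) ↔ 1 / Real.sqrt 2 < C) :=
  stmt18_general C hC0
end
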